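/- An eventually-zero sequence of nonnegative integers I = (i_0, ..., i_f, 0, ...) with i_f its last nonzero term is the frame of some Dyck path if and only if: i_0 = 1 when f = 0; i_0 ≥ 2 when f > 0; the alternating partial sums satisfy i_1 - i_0 ≥ 0 (when f > 1), i_2 - i_1 + i_0 ≥ 2, i_3 - i_2 + i_1 - i_0 ≥ 0, i_4 - i_3 + i_2 - i_1 + i_0 ≥ 2, and so on (even-indexed alternating sums ≥ 2, odd-indexed ≥ 0, for partial sums ending strictly before f); and the full alternating sum satisfies i_0 - i_1 + i_2 - ... + (-1)^f i_f = 1. -/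

import Mathlib

/-- A step of a Dyck path: `true` = up step (1,1), `false` = down step (1,-1). -/
def dstep (b : Bool) : ℤ := if b then 1 else -1

/-- Height of the path after its first `k` steps. -/
def dheight (p : List Bool) (k : ℕ) : ℤ := ((p.take k).map dstep).sum

/-- A Dyck path: ends at height 0 and never goes below the x-axis. -/
def IsDyck (p : List Bool) : Prop :=
  (p.map dstep).sum = 0 ∧ ∀ k, 0 ≤ dheight p k

/-- Number of lattice points of the path at level `l` (its "feet" at level `l`). -/
def feet (p : List Bool) (l : ℤ) : ℕ :=
  ((List.range (p.length + 1)).map (dheight p)).count l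

/-- The frame of a Dyck path: at position `k`, the number of its points at height `k`. -/
def frame (p : List Bool) : ℕ → ℕ := fun k => feet p (k : ℤ)

/-- `DyckFeet m l j` = number of Dyck paths of length `m` with exactly `j` points at level `l`. -/
noncomputable def DyckFeet (m : ℕ) (l : ℤ) (j : ℕ) : ℕ :=
  Set.ncard {p : List Bool | p.length = m ∧ IsDyck p ∧ feet p l = j}

/-- A sequence is admissible if it is the frame of some Dyck path. -/
def Admissible (I : ℕ → ℕ) : Prop := ∃ p : List Bool, IsDyck p ∧ frame p = I

/-- The alternating sum i_m - i_{m-1} + ... + (-1)^m i_0. -/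
def altA (I : ℕ → ℕ) (m : ℕ) : ℤ := ∑ t ∈ Finset.range (m + 1), (-1) ^ (m - t) * (I t : ℤ)

/-!
Let `u k` be the number of up steps of a Dyck path starting at height `k`. Down steps leaving
height `k + 1` are exactly as many as up steps leaving height `k`, and every point other than the
origin is entered by one step, so the frame satisfies `i 0 = u 0 + 1` and
`i (k + 1) = u k + u (k + 1)`. Inverting this, `u k = altA I k - (-1) ^ k`. A path whose highest
level is `f` has `u k ≥ 1` for `k < f` and `u f = 0`, which is the stated system of inequalities
together with the final equation. Conversely every profile with `u k ≥ 1` for `k < f` is realised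
by the path that makes `u 0 - 1` peaks at height `0` and then climbs into a path realising the
shifted profile.
-/

def stepCount (p : List Bool) (b : Bool) (l : ℤ) : ℕ :=
  (List.range p.length).countP fun k => decide (p[k]? = some b ∧ dheight p k = l)

lemma dheight_zero (p : List Bool) : dheight p 0 = 0 := by simp [dheight]

lemma dheight_of_length_le (p : List Bool) {k : ℕ} (h : p.length ≤ k) :
    dheight p k = (p.map dstep).sum := by
  simp [dheight, List.take_of_length_le h]

lemma dheight_append_of_le (p q : List Bool) {k : ℕ} (h : k ≤ p.length) :
    dheight (p ++ q) k = dheight p k := by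
  simp [dheight, List.take_append_of_le_length h]

lemma dheight_append_length_add (p q : List Bool) (k : ℕ) :
    dheight (p ++ q) (p.length + k) = (p.map dstep).sum + dheight q k := by
  rw [dheight, List.take_append, List.take_of_length_le (by omega)]
  simp [dheight]

lemma dheight_succ (p : List Bool) {k : ℕ} (h : k < p.length) :
    dheight p (k + 1) = dheight p k + dstep p[k] := by
  simp only [dheight]
  rw [List.take_add_one, List.getElem?_eq_getElem h]
  simp only [Option.toList_some, List.map_append, List.sum_append, List.map_singleton,
    List.sum_singleton]

lemma stepCount_append (p q : List Bool) (b : Bool) (l : ℤ) :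
    stepCount (p ++ q) b l = stepCount p b l + stepCount q b (l - (p.map dstep).sum) := by
  rw [stepCount, List.length_append, List.range_add, List.countP_append, List.countP_map]
  congr 1
  · refine List.countP_congr fun k hk => ?_
    rw [List.mem_range] at hk
    simp [List.getElem?_append_left hk, dheight_append_of_le p q hk.le]
  · refine List.countP_congr fun k _ => ?_
    simp only [Function.comp_apply, List.getElem?_append_right (Nat.le_add_right _ _),
      Nat.add_sub_cancel_left, dheight_append_length_add, decide_eq_true_eq]
    constructor <;> rintro ⟨h1, h2⟩ <;> exact ⟨h1, by omega⟩

lemma stepCount_singleton (c b : Bool) (l : ℤ) :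
    stepCount [c] b l = if c = b ∧ l = 0 then 1 else 0 := by
  by_cases hl : l = 0 <;> simp [stepCount, dheight_zero, hl, eq_comm (a := (0 : ℤ))]

lemma feet_append_singleton (p : List Bool) (c : Bool) (l : ℤ) :
    feet (p ++ [c]) l = feet p l + if (p.map dstep).sum + dstep c = l then 1 else 0 := by
  have hlast : dheight (p ++ [c]) (p.length + 1) = (p.map dstep).sum + dstep c := by
    simp [dheight]
  simp only [feet, List.length_append, List.length_singleton, List.range_succ (n := p.length + 1),
    List.map_append, List.count_append, List.map_singleton, hlast]
  congr 1
  · refine congrArg _ (List.map_congr_left fun k hk => ?_)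
    exact dheight_append_of_le p [c] (by simpa [Nat.lt_succ_iff] using hk)
  · by_cases h : (p.map dstep).sum + dstep c = l <;> simp [h]

/-- Each point at height `l` other than the origin is entered by an up step from `l - 1`
or a down step from `l + 1`. -/
lemma feet_eq_stepCount (p : List Bool) (l : ℤ) :
    (feet p l : ℤ) =
      (if l = 0 then 1 else 0) + stepCount p true (l - 1) + stepCount p false (l + 1) := by
  induction p using List.reverseRecOn with
  | nil => by_cases hl : l = 0 <;> simp [feet, stepCount, dheight, hl, eq_comm (a := (0 : ℤ))]
  | append_singleton p c ih =>
    rw [feet_append_singleton, stepCount_append, stepCount_append, stepCount_singleton,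
      stepCount_singleton]
    cases c <;> simp [dstep] <;> split_ifs at ih ⊢ <;> omega

/-- Between heights `l` and `l + 1` the path crosses upwards as often as downwards, up to the
one net crossing between its endpoints. -/
lemma stepCount_true_sub_stepCount_false (p : List Bool) (l : ℤ) :
    (stepCount p true l : ℤ) - stepCount p false (l + 1) =
      (if 0 ≤ l ∧ l < (p.map dstep).sum then 1 else 0) -
        (if (p.map dstep).sum ≤ l ∧ l < 0 then 1 else 0) := by
  induction p using List.reverseRecOn with
  | nil => simp [stepCount]
  | append_singleton p c ih =>
    rw [stepCount_append, stepCount_append, stepCount_singleton, stepCount_singleton]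
    cases c <;> simp [dstep] <;> split_ifs at ih ⊢ <;> omega

lemma stepCount_true_pos_of_lt_dheight (p : List Bool) {l : ℤ} (hl : 0 ≤ l) :
    ∀ {K : ℕ}, l < dheight p K → 0 < stepCount p true l := by
  intro K
  induction K with
  | zero => rw [dheight_zero]; omega
  | succ K ih =>
    intro hlt
    by_cases hK : l < dheight p K
    · exact ih hK
    have hKlen : K < p.length := by
      by_contra! h
      rw [dheight_of_length_le p h, dheight_of_length_le p (by omega)] at *
      omega
    rw [dheight_succ p hKlen] at hlt
    have hup : p[K] = true ∧ dheight p K = l := by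
      cases hc : p[K]
      · simp [hc, dstep] at hlt
        omega
      · simp only [hc, dstep] at hlt
        exact ⟨rfl, by omega⟩
    refine List.countP_pos_iff.mpr ⟨K, List.mem_range.mpr hKlen, ?_⟩
    simp [List.getElem?_eq_getElem hKlen, hup]

lemma stepCount_true_pos_of_lt_of_feet_ne_zero (p : List Bool) {m n : ℕ} (hn : feet p n ≠ 0)
    (hmn : m < n) : 0 < stepCount p true m := by
  obtain ⟨K, -, hK⟩ : ∃ K, K < p.length + 1 ∧ dheight p K = n := by
    simpa [feet, List.count_eq_zero] using hn
  exact stepCount_true_pos_of_lt_dheight p (Nat.cast_nonneg m) (K := K) (by omega)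

section IsDyck

variable {p : List Bool}

lemma IsDyck.stepCount_of_neg (hp : IsDyck p) (b : Bool) {l : ℤ} (hl : l < 0) :
    stepCount p b l = 0 := by
  refine List.countP_eq_zero.mpr fun k _ => ?_
  have := hp.2 k
  simp only [decide_eq_true_eq, not_and]
  omega

lemma IsDyck.stepCount_false_add_one (hp : IsDyck p) {l : ℤ} (hl : 0 ≤ l) :
    stepCount p false (l + 1) = stepCount p true l := by
  have := stepCount_true_sub_stepCount_false p l
  rw [hp.1] at this
  split_ifs at this <;> omega

lemma IsDyck.frame_zero (hp : IsDyck p) : frame p 0 = stepCount p true 0 + 1 := by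
  have h := feet_eq_stepCount p 0
  rw [if_pos rfl, zero_sub, hp.stepCount_of_neg true (by norm_num), Nat.cast_zero, add_zero,
    hp.stepCount_false_add_one le_rfl] at h
  simp only [frame, Nat.cast_zero]
  omega

lemma IsDyck.frame_add_one (hp : IsDyck p) (k : ℕ) :
    frame p (k + 1) = stepCount p true k + stepCount p true (k + 1) := by
  have h := feet_eq_stepCount p (k + 1)
  rw [if_neg (by omega), add_sub_cancel_right,
    hp.stepCount_false_add_one (by positivity)] at h
  simp only [frame, Nat.cast_add, Nat.cast_one]
  omega

end IsDyck

lemma altA_zero (I : ℕ → ℕ) : altA I 0 = I 0 := by simp [altA]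

lemma altA_add_one (I : ℕ → ℕ) (m : ℕ) : altA I (m + 1) = I (m + 1) - altA I m := by
  have hsign : ∀ t ∈ Finset.range (m + 1),
      (-1 : ℤ) ^ (m + 1 - t) * I t = -((-1) ^ (m - t) * I t) := by
    intro t ht
    rw [Nat.sub_add_comm (Finset.mem_range_succ_iff.mp ht), pow_succ]
    ring
  rw [altA, Finset.sum_range_succ, Finset.sum_congr rfl hsign, Finset.sum_neg_distrib, altA]
  simp only [Nat.sub_self, pow_zero, one_mul]
  ring

/-- On the frame of a Dyck path this counts the up steps starting at each height
(`IsDyck.upProfile_frame`). -/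
def upProfile (I : ℕ → ℕ) (k : ℕ) : ℤ := altA I k - (-1) ^ k

lemma upProfile_zero (I : ℕ → ℕ) : upProfile I 0 = I 0 - 1 := by
  simp [upProfile, altA_zero]

lemma upProfile_add_one (I : ℕ → ℕ) (k : ℕ) :
    upProfile I (k + 1) = I (k + 1) - upProfile I k := by
  rw [upProfile, upProfile, altA_add_one, pow_succ]
  ring

lemma eq_of_upProfile_eq {I J : ℕ → ℕ} (h : ∀ k, upProfile I k = upProfile J k) : I = J := by
  funext k
  cases k with
  | zero =>
    have := h 0
    rw [upProfile_zero, upProfile_zero] at this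
    omega
  | succ k =>
    have := h (k + 1)
    rw [upProfile_add_one, upProfile_add_one, h k] at this
    omega

lemma IsDyck.upProfile_frame {p : List Bool} (hp : IsDyck p) (k : ℕ) :
    upProfile (frame p) k = stepCount p true k := by
  induction k with
  | zero => rw [upProfile_zero, hp.frame_zero]; push_cast; ring
  | succ k ih => rw [upProfile_add_one, ih, hp.frame_add_one]; push_cast; ring

lemma isDyck_nil : IsDyck [] := ⟨by simp, fun k => by simp [dheight]⟩

lemma IsDyck.append {p q : List Bool} (hp : IsDyck p) (hq : IsDyck q) : IsDyck (p ++ q) := by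
  refine ⟨by simp [hp.1, hq.1], fun k => ?_⟩
  rcases le_or_gt k p.length with hk | hk
  · rw [dheight_append_of_le p q hk]
    exact hp.2 k
  · obtain ⟨j, rfl⟩ := Nat.exists_eq_add_of_le hk.le
    rw [dheight_append_length_add, hp.1, zero_add]
    exact hq.2 j

def elevate (q : List Bool) : List Bool := [true] ++ q ++ [false]

lemma IsDyck.elevate {q : List Bool} (hq : IsDyck q) : IsDyck (elevate q) := by
  show IsDyck ([true] ++ q ++ [false])
  refine ⟨by simp [dstep, hq.1], fun k => ?_⟩
  cases k with
  | zero => rw [dheight_zero]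
  | succ j =>
    have hdown : ∀ i, -1 ≤ dheight [false] i := by
      rintro (_ | _) <;> simp [dheight, dstep]
    have htail : -1 ≤ dheight (q ++ [false]) j := by
      rcases le_or_gt j q.length with hj | hj
      · rw [dheight_append_of_le q _ hj]
        linarith [hq.2 j]
      · obtain ⟨i, rfl⟩ := Nat.exists_eq_add_of_le hj.le
        rw [dheight_append_length_add, hq.1, zero_add]
        exact hdown i
    rw [List.append_assoc, add_comm, ← List.length_singleton (a := true),
      dheight_append_length_add]
    simp only [List.map_cons, List.map_nil, List.sum_cons, List.sum_nil, dstep, if_true]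
    omega

lemma stepCount_elevate (q : List Bool) (l : ℤ) :
    stepCount (elevate q) true l = (if l = 0 then 1 else 0) + stepCount q true (l - 1) := by
  rw [elevate, stepCount_append, stepCount_append, stepCount_singleton, stepCount_singleton]
  simp [dstep]

def peaks : ℕ → List Bool
  | 0 => []
  | n + 1 => elevate [] ++ peaks n

lemma isDyck_peaks (n : ℕ) : IsDyck (peaks n) := by
  induction n with
  | zero => exact isDyck_nil
  | succ n ih => exact isDyck_nil.elevate.append ih

lemma stepCount_peaks (n : ℕ) (l : ℤ) : stepCount (peaks n) true l = if l = 0 then n else 0 := by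
  induction n with
  | zero => simp [peaks, stepCount]
  | succ n ih =>
    rw [peaks, stepCount_append, stepCount_elevate, isDyck_nil.elevate.1, sub_zero, ih]
    simp only [stepCount, List.length_nil, List.range_zero, List.countP_nil, add_zero]
    split_ifs <;> omega

def tower (g : ℕ → ℕ) : ℕ → List Bool
  | 0 => []
  | n + 1 => peaks (g 0 - 1) ++ elevate (tower (fun k => g (k + 1)) n)

lemma isDyck_tower (g : ℕ → ℕ) (n : ℕ) : IsDyck (tower g n) := by
  induction n generalizing g with
  | zero => exact isDyck_nil
  | succ n ih => exact (isDyck_peaks _).append (ih _).elevate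

lemma stepCount_tower {g : ℕ → ℕ} {n : ℕ} (hg : ∀ k < n, 0 < g k) (k : ℕ) :
    stepCount (tower g n) true k = if k < n then g k else 0 := by
  induction n generalizing g k with
  | zero => simp [tower, stepCount]
  | succ n ih =>
    rw [tower, stepCount_append, (isDyck_peaks _).1, sub_zero, stepCount_peaks,
      stepCount_elevate]
    cases k with
    | zero =>
      rw [Nat.cast_zero, zero_sub, (isDyck_tower _ _).stepCount_of_neg true (by norm_num)]
      have := hg 0 n.succ_pos
      simp only [if_true, n.succ_pos]
      omega
    | succ k =>
      rw [Nat.cast_add_one, add_sub_cancel_right, ih (fun j hj => hg (j + 1) (by omega))]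
      simp only [if_neg (by omega : (k : ℤ) + 1 ≠ 0), Nat.add_lt_add_iff_right]
      omega

lemma exists_isDyck_stepCount_eq {g : ℕ → ℕ} {n : ℕ} (hpos : ∀ k < n, 0 < g k)
    (hzero : ∀ k, n ≤ k → g k = 0) : ∃ p, IsDyck p ∧ ∀ k : ℕ, stepCount p true k = g k := by
  refine ⟨tower g n, isDyck_tower g n, fun k => ?_⟩
  rw [stepCount_tower hpos]
  split_ifs with hk
  · rfl
  · exact (hzero k (not_lt.mp hk)).symm

lemma upProfile_eq_zero_of_le {I : ℕ → ℕ} {f : ℕ} (hz : ∀ k > f, I k = 0)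
    (hf : upProfile I f = 0) {k : ℕ} (hk : f ≤ k) : upProfile I k = 0 := by
  induction k, hk using Nat.le_induction with
  | base => exact hf
  | succ k hk ih => rw [upProfile_add_one, ih, hz (k + 1) (by omega)]; simp

theorem admissible_iff_upProfile {I : ℕ → ℕ} {f : ℕ} (hf : I f ≠ 0) (hz : ∀ k > f, I k = 0) :
    Admissible I ↔ (∀ k < f, 0 < upProfile I k) ∧ upProfile I f = 0 := by
  constructor
  · rintro ⟨p, hp, rfl⟩
    refine ⟨fun k hk => ?_, ?_⟩
    · rw [hp.upProfile_frame]
      exact_mod_cast stepCount_true_pos_of_lt_of_feet_ne_zero p hf hk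
    · have hnext := hp.frame_add_one f
      rw [hz (f + 1) f.lt_succ_self] at hnext
      rw [hp.upProfile_frame]
      omega
  · rintro ⟨hpos, hf0⟩
    have hzero : ∀ k, f ≤ k → upProfile I k = 0 := fun k => upProfile_eq_zero_of_le hz hf0
    have hnonneg : ∀ k, 0 ≤ upProfile I k := fun k =>
      (lt_or_ge k f).elim (fun hk => (hpos k hk).le) (fun hk => (hzero k hk).ge)
    obtain ⟨p, hp, hsteps⟩ := exists_isDyck_stepCount_eq (g := fun k => (upProfile I k).toNat)
      (fun k hk => by simpa using hpos k hk) (fun k hk => by simp [hzero k hk])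
    refine ⟨p, hp, eq_of_upProfile_eq fun k => ?_⟩
    rw [hp.upProfile_frame, hsteps, Int.toNat_of_nonneg (hnonneg k)]

lemma sum_range_neg_one_pow_mul (I : ℕ → ℕ) (f : ℕ) :
    ∑ t ∈ Finset.range (f + 1), (-1 : ℤ) ^ t * I t = (-1) ^ f * altA I f := by
  rw [altA, Finset.mul_sum]
  refine Finset.sum_congr rfl fun t ht => ?_
  have hpow : f + (f - t) = 2 * (f - t) + t := by
    have := Finset.mem_range_succ_iff.mp ht
    omega
  rw [← mul_assoc, ← pow_add, hpow, pow_add, pow_mul]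
  norm_num

lemma sum_range_neg_one_pow_mul_eq_one_iff (I : ℕ → ℕ) (f : ℕ) :
    ∑ t ∈ Finset.range (f + 1), (-1 : ℤ) ^ t * I t = 1 ↔ upProfile I f = 0 := by
  rw [sum_range_neg_one_pow_mul, upProfile]
  rcases neg_one_pow_eq_or ℤ f with h | h <;> rw [h] <;> omega

lemma Even.upProfile_pos_iff {I : ℕ → ℕ} {m : ℕ} (hm : Even m) :
    0 < upProfile I m ↔ 2 ≤ altA I m := by
  rw [upProfile, hm.neg_one_pow]
  omega

lemma Odd.upProfile_pos_iff {I : ℕ → ℕ} {m : ℕ} (hm : Odd m) :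
    0 < upProfile I m ↔ 0 ≤ altA I m := by
  rw [upProfile, hm.neg_one_pow]
  omega

/-- Characterization of admissible frames: an eventually zero sequence with last nonzero
entry at index f is the frame of a Dyck path iff i_0 = 1 (f = 0) or i_0 ≥ 2 (f > 0),
the odd alternating partial sums (ending before f) are ≥ 0, the even ones are ≥ 2,
and the full alternating sum i_0 - i_1 + ... + (-1)^f i_f equals 1. -/
theorem stmt11 (I : ℕ → ℕ) (f : ℕ) (hf : I f ≠ 0) (hz : ∀ k > f, I k = 0) :
    Admissible I ↔
      ((f = 0 → I 0 = 1) ∧ (0 < f → 2 ≤ I 0) ∧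
       (∀ m, 0 < m → m < f → (Odd m → 0 ≤ altA I m) ∧ (Even m → 2 ≤ altA I m)) ∧
       (∑ t ∈ Finset.range (f + 1), (-1) ^ t * (I t : ℤ)) = 1) := by
  rw [admissible_iff_upProfile hf hz, sum_range_neg_one_pow_mul_eq_one_iff]
  constructor
  · rintro ⟨hpos, hf0⟩
    refine ⟨fun h => ?_, fun h => ?_, fun m _ hm => ⟨fun ho => ho.upProfile_pos_iff.mp (hpos m hm),
      fun he => he.upProfile_pos_iff.mp (hpos m hm)⟩, hf0⟩
    · subst h
      rw [upProfile_zero] at hf0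
      omega
    · have h0 := hpos 0 h
      rw [upProfile_zero] at h0
      omega
  · rintro ⟨-, h0, hm, hf0⟩
    refine ⟨fun k hk => ?_, hf0⟩
    rcases Nat.eq_zero_or_pos k with rfl | hk0
    · rw [upProfile_zero]
      have := h0 hk
      omega
    · rcases Nat.even_or_odd k with he | ho
      · exact he.upProfile_pos_iff.mpr ((hm k hk0 hk).2 he)
      · exact ho.upProfile_pos_iff.mpr ((hm k hk0 hk).1 ho)
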